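/- Let G be connected, p > 1, and let λ₁ = inf{p φ_{G,p}(x)/‖x‖^p : x ∈ ℝ^N_0 \ {0}} and λ_{1,q} = inf{p φ_{G,p,q}(x)/‖x‖^p : x ∈ ℝ^N_0 \ {0}} for q > 1. Then λ₁ ≤ λ_{1,q} ≤ ν_E^{p/q} λ₁, where ν_E = max_{e∈E} #e(#e−1)/2; in particular λ_{1,q} → λ₁ as q → ∞. -/

import Mathlib

open Finset Real Filter
open scoped RealInnerProductSpace

/-- generalized edge gradient: `f_{e,q}(x) = (Σ_{i<j, i,j∈e} |x_i - x_j|^q)^{1/q}` -/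
noncomputable def feq {N : ℕ} (q : ℝ) (e : Finset (Fin N)) (x : EuclideanSpace ℝ (Fin N)) : ℝ :=
  (∑ p ∈ (e ×ˢ e).filter (fun p => p.1 < p.2), |x p.1 - x p.2| ^ q) ^ (1/q)

/-- `f_e(x) = max_{i,j ∈ e} |x_i - x_j|` -/
noncomputable def femax {N : ℕ} (e : Finset (Fin N)) (x : EuclideanSpace ℝ (Fin N)) : ℝ :=
  ⨆ p ∈ (e ×ˢ e : Finset (Fin N × Fin N)), |x p.1 - x p.2|

/-- `φ_{G,p,q}(x) = (1/p) Σ_{e∈E} w(e) f_{e,q}(x)^p` -/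
noncomputable def phiq {N : ℕ} (E : Finset (Finset (Fin N))) (w : Finset (Fin N) → ℝ)
    (p q : ℝ) (x : EuclideanSpace ℝ (Fin N)) : ℝ :=
  (1/p) * ∑ e ∈ E, w e * feq q e x ^ p

/-- `φ_{G,p}(x) = (1/p) Σ_{e∈E} w(e) f_e(x)^p` -/
noncomputable def phim {N : ℕ} (E : Finset (Finset (Fin N))) (w : Finset (Fin N) → ℝ)
    (p : ℝ) (x : EuclideanSpace ℝ (Fin N)) : ℝ :=
  (1/p) * ∑ e ∈ E, w e * femax e x ^ p

/-- `ν_E = max_{e∈E} #e(#e-1)/2` -/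
def nuE {N : ℕ} (E : Finset (Finset (Fin N))) : ℕ :=
  E.sup fun e => e.card * (e.card - 1) / 2

/-- `i` and `j` are joined by a chain of `k` hyperedges of `E`. -/
def chained {N : ℕ} (E : Finset (Finset (Fin N))) (i j : Fin N) (k : ℕ) : Prop :=
  ∃ μ : ℕ → Fin N, μ 0 = i ∧ μ k = j ∧ ∀ l < k, ∃ e ∈ E, μ l ∈ e ∧ μ (l + 1) ∈ e

/-- hypergraph distance: minimal chain length -/
noncomputable def hdist {N : ℕ} (E : Finset (Finset (Fin N))) (i j : Fin N) : ℕ :=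
  sInf {k | chained E i j k}

/-- hypergraph diameter -/
noncomputable def hdiam {N : ℕ} (E : Finset (Finset (Fin N))) : ℕ :=
  Finset.univ.sup fun i => Finset.univ.sup fun j => hdist E i j

/-- mean-value vector `x̄` -/
noncomputable def meanVec {N : ℕ} (z : EuclideanSpace ℝ (Fin N)) : EuclideanSpace ℝ (Fin N) :=
  WithLp.toLp 2 (fun _ => (∑ i, z i) / N)

lemma le_femax {N : ℕ} {e : Finset (Fin N)} {x : EuclideanSpace ℝ (Fin N)} {i j : Fin N}
    (hi : i ∈ e) (hj : j ∈ e) : |x i - x j| ≤ femax e x := by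
  have hb : BddAbove (Set.range fun p : Fin N × Fin N =>
      ⨆ _ : p ∈ (e ×ˢ e : Finset (Fin N × Fin N)), |x p.1 - x p.2|) :=
    Set.Finite.bddAbove (Set.finite_range _)
  have h1 : (⨆ _ : ((i, j) ∈ (e ×ˢ e : Finset (Fin N × Fin N))), |x i - x j|) ≤ femax e x :=
    le_ciSup hb (i, j)
  rwa [ciSup_pos (Finset.mk_mem_product hi hj)] at h1

lemma femax_nonneg {N : ℕ} {e : Finset (Fin N)} (he : e.Nonempty) (x : EuclideanSpace ℝ (Fin N)) :
    0 ≤ femax e x := by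
  obtain ⟨i, hi⟩ := he
  have := le_femax (x := x) hi hi
  simpa using this

lemma femax_le {N : ℕ} {e : Finset (Fin N)} {x : EuclideanSpace ℝ (Fin N)} {c : ℝ}
    (hc : 0 ≤ c) (h : ∀ i ∈ e, ∀ j ∈ e, |x i - x j| ≤ c) : femax e x ≤ c := by
  refine Real.iSup_le (fun p => Real.iSup_le (fun hp => ?_) hc) hc
  exact h p.1 (Finset.mem_product.1 hp).1 p.2 (Finset.mem_product.1 hp).2

lemma feq_nonneg {N : ℕ} (q : ℝ) (e : Finset (Fin N)) (x : EuclideanSpace ℝ (Fin N)) :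
    0 ≤ feq q e x :=
  Real.rpow_nonneg (Finset.sum_nonneg fun _ _ => Real.rpow_nonneg (abs_nonneg _) q) _

lemma abs_le_feq {N : ℕ} {q : ℝ} (hq : 0 < q) {e : Finset (Fin N)}
    (x : EuclideanSpace ℝ (Fin N)) {i j : Fin N} (h : i < j) (hi : i ∈ e) (hj : j ∈ e) :
    |x i - x j| ≤ feq q e x := by
  have hmem : (i, j) ∈ (e ×ˢ e).filter (fun p => p.1 < p.2) :=
    Finset.mem_filter.2 ⟨Finset.mk_mem_product hi hj, h⟩
  have h1 : |x i - x j| ^ q ≤ ∑ p ∈ (e ×ˢ e).filter (fun p => p.1 < p.2), |x p.1 - x p.2| ^ q :=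
    Finset.single_le_sum (f := fun p : Fin N × Fin N => |x p.1 - x p.2| ^ q)
      (fun _ _ => Real.rpow_nonneg (abs_nonneg _) q) hmem
  calc |x i - x j| = (|x i - x j| ^ q) ^ (1/q) := by
        rw [one_div, Real.rpow_rpow_inv (abs_nonneg _) hq.ne']
    _ ≤ feq q e x := Real.rpow_le_rpow (Real.rpow_nonneg (abs_nonneg _) q) h1 (by positivity)

lemma femax_le_feq {N : ℕ} {q : ℝ} (hq : 0 < q) {e : Finset (Fin N)}
    (x : EuclideanSpace ℝ (Fin N)) : femax e x ≤ feq q e x := by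
  refine femax_le (feq_nonneg q e x) (fun i hi j hj => ?_)
  rcases lt_trichotomy i j with h | h | h
  · exact abs_le_feq hq x h hi hj
  · rw [h, sub_self, abs_zero]; exact feq_nonneg q e x
  · rw [abs_sub_comm]; exact abs_le_feq hq x h hj hi

lemma card_pairs {N : ℕ} (e : Finset (Fin N)) :
    ((e ×ˢ e).filter (fun p => p.1 < p.2)).card = e.card * (e.card - 1) / 2 := by
  have hoff : e.offDiag = (e ×ˢ e).filter (fun p => p.1 < p.2) ∪
      (e ×ˢ e).filter (fun p => p.2 < p.1) := by
    ext p
    simp only [Finset.mem_offDiag, Finset.mem_union, Finset.mem_filter, Finset.mem_product]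
    constructor
    · rintro ⟨h1, h2, h⟩
      rcases lt_or_gt_of_ne h with h | h
      exacts [Or.inl ⟨⟨h1, h2⟩, h⟩, Or.inr ⟨⟨h1, h2⟩, h⟩]
    · rintro (⟨⟨h1, h2⟩, h⟩ | ⟨⟨h1, h2⟩, h⟩)
      exacts [⟨h1, h2, ne_of_lt h⟩, ⟨h1, h2, ne_of_gt h⟩]
  have hdisj : Disjoint ((e ×ˢ e).filter (fun p => p.1 < p.2))
      ((e ×ˢ e).filter (fun p => p.2 < p.1)) := by
    rw [Finset.disjoint_left]
    intro p h1 h2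
    have := (Finset.mem_filter.1 h1).2
    have := (Finset.mem_filter.1 h2).2
    exact absurd this (not_lt_of_gt ‹p.1 < p.2›)
  have hswap : ((e ×ˢ e).filter (fun p => p.2 < p.1)).card
      = ((e ×ˢ e).filter (fun p => p.1 < p.2)).card := by
    apply Finset.card_nbij' (fun p => (p.2, p.1)) (fun p => (p.2, p.1)) <;>
      simp +contextual [Set.MapsTo, Set.LeftInvOn, Set.RightInvOn, Set.EqOn, Finset.mem_filter, Finset.mem_product, and_comm]
  have hcard : e.offDiag.card = 2 * ((e ×ˢ e).filter (fun p => p.1 < p.2)).card := by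
    rw [hoff, Finset.card_union_of_disjoint hdisj, hswap]; ring
  have h2 : e.offDiag.card = e.card * e.card - e.card := Finset.offDiag_card e
  have : e.card * (e.card - 1) = e.card * e.card - e.card := by
    cases Nat.eq_zero_or_pos e.card with
    | inl h => simp [h]
    | inr h => rw [Nat.mul_sub_one]
  omega

lemma feq_le_nu {N : ℕ} {q : ℝ} (hq : 0 < q) {E : Finset (Finset (Fin N))}
    {e : Finset (Fin N)} (heE : e ∈ E) (he : e.Nonempty) (x : EuclideanSpace ℝ (Fin N)) :
    feq q e x ≤ (nuE E : ℝ) ^ (1/q) * femax e x := by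
  set M := femax e x with hM
  have hM0 : 0 ≤ M := femax_nonneg he x
  set S := (e ×ˢ e).filter (fun p => p.1 < p.2) with hS
  have hsum : ∑ p ∈ S, |x p.1 - x p.2| ^ q ≤ (S.card : ℝ) * M ^ q := by
    have := Finset.sum_le_card_nsmul S (fun p : Fin N × Fin N => |x p.1 - x p.2| ^ q) (M ^ q)
      (fun p hp => by
        have hp' := Finset.mem_filter.1 hp
        have h1 := Finset.mem_product.1 hp'.1
        exact Real.rpow_le_rpow (abs_nonneg _) (le_femax h1.1 h1.2) hq.le)
    simpa [nsmul_eq_mul] using this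
  have hcard : (S.card : ℝ) ≤ (nuE E : ℝ) := by
    have : S.card ≤ nuE E := by
      rw [hS, card_pairs]
      exact Finset.le_sup (f := fun e : Finset (Fin N) => e.card * (e.card - 1) / 2) heE
    exact_mod_cast this
  have h2 : ∑ p ∈ S, |x p.1 - x p.2| ^ q ≤ (nuE E : ℝ) * M ^ q :=
    hsum.trans (mul_le_mul_of_nonneg_right hcard (Real.rpow_nonneg hM0 q))
  calc feq q e x ≤ ((nuE E : ℝ) * M ^ q) ^ (1/q) :=
        Real.rpow_le_rpow (Finset.sum_nonneg fun _ _ => Real.rpow_nonneg (abs_nonneg _) q)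
          h2 (by positivity)
    _ = (nuE E : ℝ) ^ (1/q) * M := by
        rw [Real.mul_rpow (Nat.cast_nonneg _) (Real.rpow_nonneg hM0 q), one_div,
          Real.rpow_rpow_inv hM0 hq.ne']

theorem stmt18 (N : ℕ) (hN : 2 ≤ N) (E : Finset (Finset (Fin N))) (hE : ∀ e ∈ E, 2 ≤ e.card)
    (hEne : E.Nonempty)
    (w : Finset (Fin N) → ℝ) (hw : ∀ e ∈ E, 0 < w e)
    (hconn : ∀ i j : Fin N, ∃ k, chained E i j k)
    (p : ℝ) (hp : 1 < p) (lam1 : ℝ)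
    (hlam1 : lam1 = sInf {r : ℝ | ∃ x : EuclideanSpace ℝ (Fin N),
      (∑ i, x i) = 0 ∧ x ≠ 0 ∧ r = p * phim E w p x / ‖x‖ ^ p})
    (lam : ℝ → ℝ)
    (hlam : ∀ q : ℝ, lam q = sInf {r : ℝ | ∃ x : EuclideanSpace ℝ (Fin N),
      (∑ i, x i) = 0 ∧ x ≠ 0 ∧ r = p * phiq E w p q x / ‖x‖ ^ p}) :
    (∀ q : ℝ, 1 < q → lam1 ≤ lam q ∧ lam q ≤ (nuE E : ℝ) ^ (p/q) * lam1) ∧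
    Tendsto lam atTop (nhds lam1) := by
  have hp0 : (0:ℝ) < p := lt_trans one_pos hp
  -- ν ≥ 1
  have hnu1 : (1:ℕ) ≤ nuE E := by
    obtain ⟨e, he⟩ := hEne
    have h2 := hE e he
    have h3 : 2 * 1 ≤ e.card * (e.card - 1) := Nat.mul_le_mul h2 (by omega)
    refine le_trans ?_ (Finset.le_sup (f := fun e : Finset (Fin N) => e.card * (e.card - 1) / 2) he)
    show (1:ℕ) ≤ e.card * (e.card - 1) / 2
    omega
  have hnuR : (1:ℝ) ≤ (nuE E : ℝ) := by exact_mod_cast hnu1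
  have hnu0 : (0:ℝ) < (nuE E : ℝ) := lt_of_lt_of_le one_pos hnuR
  -- the witness vector
  have h0N : (0:ℕ) < N := by omega
  have h1N : (1:ℕ) < N := by omega
  set i0 : Fin N := ⟨0, h0N⟩
  set i1 : Fin N := ⟨1, h1N⟩
  have hi01 : i0 ≠ i1 := by simp [i0, i1, Fin.ext_iff]
  set x₀ : EuclideanSpace ℝ (Fin N) :=
    WithLp.toLp 2 (fun i => (if i = i0 then (1:ℝ) else 0) - (if i = i1 then (1:ℝ) else 0)) with hx₀
  have hx₀sum : (∑ i, x₀ i) = 0 := by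
    simp only [hx₀, PiLp.toLp_apply, Finset.sum_sub_distrib, Finset.sum_ite_eq', Finset.mem_univ, if_true,
      sub_self]
  have hx₀ne : x₀ ≠ 0 := by
    intro h
    have : x₀ i0 = 0 := by rw [h]; rfl
    simp [hx₀, hi01] at this
  -- the sets
  set Sm := {r : ℝ | ∃ x : EuclideanSpace ℝ (Fin N),
      (∑ i, x i) = 0 ∧ x ≠ 0 ∧ r = p * phim E w p x / ‖x‖ ^ p} with hSm
  set Sq : ℝ → Set ℝ := fun q => {r : ℝ | ∃ x : EuclideanSpace ℝ (Fin N),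
      (∑ i, x i) = 0 ∧ x ≠ 0 ∧ r = p * phiq E w p q x / ‖x‖ ^ p} with hSq
  have hSmne : Sm.Nonempty := ⟨_, ⟨x₀, hx₀sum, hx₀ne, rfl⟩⟩
  have hSqne : ∀ q, (Sq q).Nonempty := fun q => ⟨_, ⟨x₀, hx₀sum, hx₀ne, rfl⟩⟩
  -- nonnegativity of ratios
  have hphim_nonneg : ∀ x : EuclideanSpace ℝ (Fin N), 0 ≤ phim E w p x := by
    intro x
    apply mul_nonneg (by positivity)
    refine Finset.sum_nonneg fun e he => mul_nonneg (hw e he).le (Real.rpow_nonneg ?_ p)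
    exact femax_nonneg (Finset.card_pos.1 (lt_of_lt_of_le two_pos (hE e he))) x
  have hphiq_nonneg : ∀ (q : ℝ) (x : EuclideanSpace ℝ (Fin N)), 0 ≤ phiq E w p q x := by
    intro q x
    apply mul_nonneg (by positivity)
    exact Finset.sum_nonneg fun e he => mul_nonneg (hw e he).le
      (Real.rpow_nonneg (feq_nonneg q e x) p)
  have hSm_nonneg : ∀ r ∈ Sm, 0 ≤ r := by
    rintro r ⟨x, -, hxne, rfl⟩
    have hx : 0 < ‖x‖ ^ p := Real.rpow_pos_of_pos (norm_pos_iff.2 hxne) p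
    exact div_nonneg (mul_nonneg hp0.le (hphim_nonneg x)) hx.le
  have hSq_nonneg : ∀ q, ∀ r ∈ Sq q, 0 ≤ r := by
    rintro q r ⟨x, -, hxne, rfl⟩
    have hx : 0 < ‖x‖ ^ p := Real.rpow_pos_of_pos (norm_pos_iff.2 hxne) p
    exact div_nonneg (mul_nonneg hp0.le (hphiq_nonneg q x)) hx.le
  have hbddm : BddBelow Sm := ⟨0, hSm_nonneg⟩
  have hbddq : ∀ q, BddBelow (Sq q) := fun q => ⟨0, hSq_nonneg q⟩
  -- key pointwise comparison
  have key : ∀ q : ℝ, 1 < q → ∀ x : EuclideanSpace ℝ (Fin N),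
      phim E w p x ≤ phiq E w p q x ∧
      phiq E w p q x ≤ (nuE E : ℝ) ^ (p/q) * phim E w p x := by
    intro q hq x
    have hq0 : 0 < q := lt_trans one_pos hq
    constructor
    · apply mul_le_mul_of_nonneg_left _ (by positivity)
      apply Finset.sum_le_sum
      intro e he
      have hene : e.Nonempty := Finset.card_pos.1 (lt_of_lt_of_le two_pos (hE e he))
      exact mul_le_mul_of_nonneg_left
        (Real.rpow_le_rpow (femax_nonneg hene x) (femax_le_feq hq0 x) hp0.le) (hw e he).le
    · have hstep : ∀ e ∈ E,
          w e * feq q e x ^ p ≤ (nuE E : ℝ) ^ (p/q) * (w e * femax e x ^ p) := by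
        intro e he
        have hene : e.Nonempty := Finset.card_pos.1 (lt_of_lt_of_le two_pos (hE e he))
        have hM0 : 0 ≤ femax e x := femax_nonneg hene x
        have h1 : feq q e x ^ p ≤ (nuE E : ℝ) ^ (p/q) * femax e x ^ p := by
          calc feq q e x ^ p ≤ ((nuE E : ℝ) ^ (1/q) * femax e x) ^ p :=
                Real.rpow_le_rpow (feq_nonneg q e x) (feq_le_nu hq0 he hene x) hp0.le
            _ = (nuE E : ℝ) ^ (p/q) * femax e x ^ p := by
                rw [Real.mul_rpow (Real.rpow_nonneg (Nat.cast_nonneg _) _) hM0,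
                  ← Real.rpow_mul (Nat.cast_nonneg _), div_mul_eq_mul_div, one_mul]
        calc w e * feq q e x ^ p ≤ w e * ((nuE E : ℝ) ^ (p/q) * femax e x ^ p) :=
              mul_le_mul_of_nonneg_left h1 (hw e he).le
          _ = (nuE E : ℝ) ^ (p/q) * (w e * femax e x ^ p) := by ring
      calc phiq E w p q x ≤ (1/p) * ∑ e ∈ E, (nuE E : ℝ) ^ (p/q) * (w e * femax e x ^ p) :=
            mul_le_mul_of_nonneg_left (Finset.sum_le_sum hstep) (by positivity)
        _ = (nuE E : ℝ) ^ (p/q) * phim E w p x := by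
            rw [← Finset.mul_sum, phim]; ring
  have main : ∀ q : ℝ, 1 < q → lam1 ≤ lam q ∧ lam q ≤ (nuE E : ℝ) ^ (p/q) * lam1 := by
    intro q hq
    have hc0 : 0 < (nuE E : ℝ) ^ (p/q) := Real.rpow_pos_of_pos hnu0 _
    constructor
    · rw [hlam1, hlam]
      refine le_csInf (hSqne q) ?_
      rintro r ⟨x, hxs, hxne, rfl⟩
      have hxp : 0 < ‖x‖ ^ p := Real.rpow_pos_of_pos (norm_pos_iff.2 hxne) p
      have h1 : p * phim E w p x / ‖x‖ ^ p ≤ p * phiq E w p q x / ‖x‖ ^ p := by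
        gcongr
        exact (key q hq x).1
      exact le_trans (csInf_le hbddm ⟨x, hxs, hxne, rfl⟩) h1
    · rw [hlam1, hlam, ← div_le_iff₀' hc0]
      refine le_csInf hSmne ?_
      rintro r ⟨x, hxs, hxne, rfl⟩
      rw [div_le_iff₀' hc0]
      have hxp : 0 < ‖x‖ ^ p := Real.rpow_pos_of_pos (norm_pos_iff.2 hxne) p
      have h2 : p * phiq E w p q x / ‖x‖ ^ p
          ≤ (nuE E : ℝ) ^ (p/q) * (p * phim E w p x / ‖x‖ ^ p) := by
        have h3 : p * phiq E w p q x ≤ (nuE E : ℝ) ^ (p/q) * (p * phim E w p x) := by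
          calc p * phiq E w p q x ≤ p * ((nuE E : ℝ) ^ (p/q) * phim E w p x) :=
                mul_le_mul_of_nonneg_left (key q hq x).2 hp0.le
            _ = (nuE E : ℝ) ^ (p/q) * (p * phim E w p x) := by ring
        calc p * phiq E w p q x / ‖x‖ ^ p
            ≤ (nuE E : ℝ) ^ (p/q) * (p * phim E w p x) / ‖x‖ ^ p := by gcongr
          _ = (nuE E : ℝ) ^ (p/q) * (p * phim E w p x / ‖x‖ ^ p) := by
              rw [mul_div_assoc]
      exact le_trans (csInf_le (hbddq q) ⟨x, hxs, hxne, rfl⟩) h2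
  refine ⟨main, ?_⟩
  have hdiv : Tendsto (fun q : ℝ => p / q) atTop (nhds 0) :=
    Filter.Tendsto.div_atTop tendsto_const_nhds tendsto_id
  have hnucont : Tendsto (fun q : ℝ => (nuE E : ℝ) ^ (p/q)) atTop (nhds 1) := by
    have hc : ContinuousAt (fun y : ℝ => (nuE E : ℝ) ^ y) 0 :=
      Real.continuousAt_const_rpow hnu0.ne'
    have h := hc.tendsto.comp hdiv
    simpa [Function.comp_def, Real.rpow_zero] using h
  have hupper : Tendsto (fun q => (nuE E : ℝ) ^ (p/q) * lam1) atTop (nhds lam1) := by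
    simpa using hnucont.mul_const lam1
  refine tendsto_of_tendsto_of_tendsto_of_le_of_le' tendsto_const_nhds hupper ?_ ?_
  · filter_upwards [eventually_gt_atTop 1] with q hq
    exact (main q hq).1
  · filter_upwards [eventually_gt_atTop 1] with q hq
    exact (main q hq).2
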